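/- arXiv:2409.07873 — 2 statements merged into one kernel-verified Lean document; each statement's English description precedes it below -/
import Mathlib

section
/- Let d ≥ 1, let D ⊆ ℝ^d be a bounded measurable set, and let s_1, …, s_N ∈ ℝ^d be pairwise distinct. Then for each i = 1, …, N the map ℝ^N → ℝ given by ψ ↦ vol(V_i(s,ψ)) is continuous on all of ℝ^N. -/
open MeasureTheory

noncomputable section

/-- The Laguerre cell `Lag_i(s, ψ)` of the diagram of the domain `D` generated by the
seed points `s` and weights `ψ`. -/
def Lag {d N : ℕ} (D : Set (EuclideanSpace ℝ (Fin d)))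
    (s : Fin N → EuclideanSpace ℝ (Fin d)) (ψ : Fin N → ℝ) (i : Fin N) :
    Set (EuclideanSpace ℝ (Fin d)) :=
  {x | x ∈ closure D ∧ ∀ j : Fin N, j ≠ i → ‖x - s i‖ ^ 2 - ψ i ≤ ‖x - s j‖ ^ 2 - ψ j}

/-- The modified Laguerre cell `V_i(s, ψ)`: the Laguerre cell intersected with the
closed ball of center `s i` and radius `√(ψ i)`. -/
def Vcell {d N : ℕ} (D : Set (EuclideanSpace ℝ (Fin d)))
    (s : Fin N → EuclideanSpace ℝ (Fin d)) (ψ : Fin N → ℝ) (i : Fin N) :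
    Set (EuclideanSpace ℝ (Fin d)) :=
  Lag D s ψ i ∩ {x | ‖x - s i‖ ^ 2 ≤ ψ i}

/-- The void cell `V_0(s, ψ)`. -/
def Vvoid {d N : ℕ} (D : Set (EuclideanSpace ℝ (Fin d)))
    (s : Fin N → EuclideanSpace ℝ (Fin d)) (ψ : Fin N → ℝ) :
    Set (EuclideanSpace ℝ (Fin d)) :=
  {x | x ∈ closure D ∧ ∀ i : Fin N, 0 ≤ ‖x - s i‖ ^ 2 - ψ i}

/-- The Kantorovich functional `K(s, ν, ψ)`. -/
def Kfun {d N : ℕ} (D : Set (EuclideanSpace ℝ (Fin d)))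
    (s : Fin N → EuclideanSpace ℝ (Fin d)) (ν ψ : Fin N → ℝ) : ℝ :=
  (∑ i, ∫ x in Vcell D s ψ i, (‖x - s i‖ ^ 2 - ψ i)) + ∑ i, ν i * ψ i

/-!
For a fixed point `x`, membership in `V_i(s, ψ)` is decided by finitely many non-strict
inequalities that are affine in `ψ`: `‖x - s_i‖² ≤ ψ_i` and, for `j ≠ i`,
`‖x - s_i‖² - ‖x - s_j‖² ≤ ψ_i - ψ_j`. Off a sphere and finitely many bisector hyperplanes
(null sets because `d ≥ 1` and the seeds are distinct) none of them is an equality, so membership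
is locally constant in `ψ`. Dominated convergence on the finite-measure set `closure D` then
gives continuity of `ψ ↦ vol(V_i(s, ψ))`.
-/

open Filter Topology

section NullSets

variable {E : Type*} [NormedAddCommGroup E] [MeasurableSpace E] [BorelSpace E]

theorem addHaar_setOf_linearMap_eq [NormedSpace ℝ E] [FiniteDimensional ℝ E] (μ : Measure E)
    [μ.IsAddHaarMeasure] {f : E →ₗ[ℝ] ℝ} (hf : f ≠ 0) (c : ℝ) : μ {x | f x = c} = 0 := by
  obtain ⟨x₀, hx₀⟩ := LinearMap.surjective_of_ne_zero hf c
  have hker : {x | f x = c} = (· + -x₀) ⁻¹' (LinearMap.ker f : Set E) := by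
    ext x
    simp [hx₀, ← sub_eq_add_neg, sub_eq_zero]
  rw [hker, measure_preimage_add_right]
  exact Measure.addHaar_submodule μ _ (LinearMap.ker_eq_top.not.2 hf)

theorem addHaar_setOf_sq_norm_sub_sub_sq_norm_sub_eq [InnerProductSpace ℝ E]
    [FiniteDimensional ℝ E] (μ : Measure E) [μ.IsAddHaarMeasure] {a b : E} (hab : a ≠ b)
    (c : ℝ) : μ {x | ‖x - a‖ ^ 2 - ‖x - b‖ ^ 2 = c} = 0 := by
  have hf : innerₛₗ ℝ (b - a) ≠ 0 := fun h => by
    have hba := LinearMap.congr_fun h (b - a)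
    rw [innerₛₗ_apply_apply, LinearMap.zero_apply, inner_self_eq_zero, sub_eq_zero] at hba
    exact hab hba.symm
  have hset : {x | ‖x - a‖ ^ 2 - ‖x - b‖ ^ 2 = c} =
      {x | innerₛₗ ℝ (b - a) x = (c - (‖a‖ ^ 2 - ‖b‖ ^ 2)) / 2} := by
    ext x
    rw [Set.mem_ofPred_eq, Set.mem_ofPred_eq, norm_sub_sq_real, norm_sub_sq_real, innerₛₗ_apply_apply, inner_sub_left, real_inner_comm a,
      real_inner_comm b]
    constructor <;> intro h <;> linarith
  rw [hset]
  exact addHaar_setOf_linearMap_eq μ hf _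

theorem addHaar_setOf_sq_norm_sub_eq [NormedSpace ℝ E] [FiniteDimensional ℝ E] [Nontrivial E]
    (μ : Measure E) [μ.IsAddHaarMeasure] (a : E) (r : ℝ) : μ {x | ‖x - a‖ ^ 2 = r} = 0 := by
  refine measure_mono_null (fun x (hx : ‖x - a‖ ^ 2 = r) => ?_) (μ.addHaar_sphere a √r)
  rw [mem_sphere_iff_norm, ← hx, Real.sqrt_sq (norm_nonneg _)]

end NullSets

theorem eventually_le_iff_of_ne {α : Type*} {l : Filter α} {g : α → ℝ} {a b : ℝ}
    (hg : Tendsto g l (𝓝 b)) (hab : a ≠ b) : ∀ᶠ y in l, (a ≤ g y ↔ a ≤ b) := by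
  rcases hab.lt_or_gt with h | h
  · filter_upwards [hg.eventually_const_lt h] with y hy
    exact iff_of_true hy.le h.le
  · filter_upwards [hg.eventually_lt_const h] with y hy
    exact iff_of_false (not_le.2 hy) (not_le.2 h)

section LaguerreCell

variable {d N : ℕ} (D : Set (EuclideanSpace ℝ (Fin d))) (s : Fin N → EuclideanSpace ℝ (Fin d))
  (i : Fin N)

theorem mem_Vcell_iff {ψ : Fin N → ℝ} {x : EuclideanSpace ℝ (Fin d)} :
    x ∈ Vcell D s ψ i ↔ x ∈ closure D ∧
      (∀ j ≠ i, ‖x - s i‖ ^ 2 - ‖x - s j‖ ^ 2 ≤ ψ i - ψ j) ∧ ‖x - s i‖ ^ 2 ≤ ψ i := by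
  simp only [Vcell, Lag, Set.mem_inter_iff, Set.mem_ofPred_eq, and_assoc]
  refine and_congr_right fun _ => and_congr_left fun _ => forall₂_congr fun j _ => ?_
  constructor <;> intro h <;> linarith

theorem Vcell_subset_closure (ψ : Fin N → ℝ) : Vcell D s ψ i ⊆ closure D :=
  fun _ hx => hx.1.1

theorem isClosed_Vcell (ψ : Fin N → ℝ) : IsClosed (Vcell D s ψ i) := by
  simp only [Vcell, Lag, Set.ofPred_and, Set.ofPred_mem_eq, Set.ofPred_forall]
  exact (isClosed_closure.inter (isClosed_iInter fun j => isClosed_iInter fun _ =>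
    isClosed_le (by fun_prop) (by fun_prop))).inter (isClosed_le (by fun_prop) (by fun_prop))

theorem eventually_mem_Vcell_iff {ψ : Fin N → ℝ} {x : EuclideanSpace ℝ (Fin d)}
    (hsphere : ‖x - s i‖ ^ 2 ≠ ψ i)
    (hbisector : ∀ j ≠ i, ‖x - s i‖ ^ 2 - ‖x - s j‖ ^ 2 ≠ ψ i - ψ j) :
    ∀ᶠ φ in 𝓝 ψ, x ∈ Vcell D s φ i ↔ x ∈ Vcell D s ψ i := by
  have hcoord (j : Fin N) : Tendsto (fun φ : Fin N → ℝ => φ j) (𝓝 ψ) (𝓝 (ψ j)) :=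
    (continuous_apply j).tendsto ψ
  have hsphere' := eventually_le_iff_of_ne (hcoord i) hsphere
  have hbisector' : ∀ᶠ φ in 𝓝 ψ, ∀ j ≠ i,
      (‖x - s i‖ ^ 2 - ‖x - s j‖ ^ 2 ≤ φ i - φ j ↔ ‖x - s i‖ ^ 2 - ‖x - s j‖ ^ 2 ≤ ψ i - ψ j) :=
    eventually_all.2 fun j => eventually_imp_distrib_left.2 fun hj =>
      eventually_le_iff_of_ne ((hcoord i).sub (hcoord j)) (hbisector j hj)
  filter_upwards [hsphere', hbisector'] with φ hφsphere hφbisector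
  rw [mem_Vcell_iff, mem_Vcell_iff, hφsphere, forall₂_congr hφbisector]

theorem ae_eventually_mem_Vcell_iff (hd : 1 ≤ d) (hs : Function.Injective s)
    (ψ : Fin N → ℝ) :
    ∀ᵐ x, ∀ᶠ φ in 𝓝 ψ, x ∈ Vcell D s φ i ↔ x ∈ Vcell D s ψ i := by
  have : Nonempty (Fin d) := ⟨⟨0, hd⟩⟩
  have hsphere : ∀ᵐ x : EuclideanSpace ℝ (Fin d), ‖x - s i‖ ^ 2 ≠ ψ i := by
    exact measure_eq_zero_iff_ae_notMem.1 (addHaar_setOf_sq_norm_sub_eq volume (s i) (ψ i))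
  have hbisector : ∀ᵐ x : EuclideanSpace ℝ (Fin d),
      ∀ j ≠ i, ‖x - s i‖ ^ 2 - ‖x - s j‖ ^ 2 ≠ ψ i - ψ j := by
    refine ae_all_iff.2 fun j => ?_
    by_cases hj : j = i
    · exact ae_of_all _ fun _ h => absurd hj h
    · filter_upwards [measure_eq_zero_iff_ae_notMem.1 <|
        addHaar_setOf_sq_norm_sub_sub_sq_norm_sub_eq volume (hs.ne (Ne.symm hj)) (ψ i - ψ j)]
        with x hx _
      exact hx
  filter_upwards [hsphere, hbisector] with x hxsphere hxbisector
  exact eventually_mem_Vcell_iff D s i hxsphere hxbisector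

end LaguerreCell

theorem stmt4_general {d N : ℕ} (hd : 1 ≤ d)
    (D : Set (EuclideanSpace ℝ (Fin d)))
    (hDb : Bornology.IsBounded D)
    (s : Fin N → EuclideanSpace ℝ (Fin d)) (hs : Function.Injective s)
    (i : Fin N) :
    Continuous fun ψ : Fin N → ℝ => (volume (Vcell D s ψ i)).toReal := by
  have hDfin : volume (closure D) ≠ ⊤ := hDb.closure.measure_lt_top.ne
  refine continuous_iff_continuousAt.2 fun ψ => ?_
  have hVfin : volume (Vcell D s ψ i) ≠ ⊤ :=
    ne_top_of_le_ne_top hDfin (measure_mono (Vcell_subset_closure D s i ψ))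
  exact (ENNReal.tendsto_toReal hVfin).comp <|
    tendsto_measure_of_ae_tendsto_indicator (𝓝 ψ) (isClosed_Vcell D s i ψ).measurableSet
      (fun φ => (isClosed_Vcell D s i φ).measurableSet) isClosed_closure.measurableSet hDfin
      (Eventually.of_forall fun φ => Vcell_subset_closure D s i φ)
      (ae_eventually_mem_Vcell_iff D s i hd hs ψ)

/-- The measure of each modified Laguerre cell depends continuously on the weights. -/
theorem stmt4 {d N : ℕ} (hd : 1 ≤ d)
    (D : Set (EuclideanSpace ℝ (Fin d)))
    (hDm : MeasurableSet D) (hDb : Bornology.IsBounded D)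
    (s : Fin N → EuclideanSpace ℝ (Fin d)) (hs : Function.Injective s)
    (i : Fin N) :
    Continuous fun ψ : Fin N → ℝ => (volume (Vcell D s ψ i)).toReal :=
  stmt4_general hd D hDb s hs i
end
end

section
/- Let d ≥ 1, let D ⊆ ℝ^d be a bounded open set, let s_1, …, s_N ∈ ℝ^d be pairwise distinct and let ψ ∈ ℝ^N. Set U := ⋃_{i=1}^N V_i(s,ψ), let μ' be the Lebesgue measure restricted to U, and let ν' := Σ_{i=1}^N vol(V_i(s,ψ))·δ_{s_i} be the discrete measure on ℝ^d with mass vol(V_i(s,ψ)) at s_i. Then for every finite measure π on ℝ^d × ℝ^d whose first marginal is μ' and whose second marginal is ν', one has ∫_{ℝ^d×ℝ^d} |x − y|² dπ(x,y) ≥ Σ_{i=1}^N ∫_{V_i(s,ψ)} |x − s_i|² dx. In other words, the map sending almost every point of V_i(s,ψ) to s_i is an optimal transport map for the quadratic cost between μ' and ν'. -/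
open MeasureTheory

noncomputable section

/-!
The potentials `ψᶜ(x) = minⱼ (‖x - sⱼ‖² - ψⱼ)` on the source and `ψ` on the seeds satisfy
`ψᶜ(x) + ψⱼ ≤ ‖x - sⱼ‖²`, with equality on `V_j`. Integrating this against any plan with the
given marginals bounds its cost from below by `∫_U ψᶜ + ∑ᵢ vol(Vᵢ) ψᵢ` (weak Kantorovich
duality). Distinct seeds make the cells overlap only on hyperplanes, so that lower bound splits
over the cells and equals `∑ᵢ ∫_{Vᵢ} ‖x - sᵢ‖²`, the cost of the map `Vᵢ ↦ sᵢ`.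
-/

open scoped InnerProductSpace ENNReal

section Hyperplane

variable {E : Type*} [NormedAddCommGroup E] [InnerProductSpace ℝ E] [FiniteDimensional ℝ E]
  [MeasurableSpace E] [BorelSpace E] (μ : Measure E) [μ.IsAddHaarMeasure]

theorem addHaar_setOf_inner_eq {v : E} (hv : v ≠ 0) (c : ℝ) : μ {x | ⟪v, x⟫_ℝ = c} = 0 := by
  set x₀ : E := (c / ‖v‖ ^ 2) • v
  have hx₀ : ⟪v, x₀⟫_ℝ = c := by
    rw [inner_smul_right, real_inner_self_eq_norm_sq]
    field_simp [norm_ne_zero_iff.2 hv]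
  have hker : LinearMap.ker (innerₛₗ ℝ v) ≠ ⊤ := fun h => hv <| inner_self_eq_zero.1 <|
    LinearMap.mem_ker.1 (h ▸ Submodule.mem_top : v ∈ LinearMap.ker (innerₛₗ ℝ v))
  have hset : {x | ⟪v, x⟫_ℝ = c} = (· + -x₀) ⁻¹' LinearMap.ker (innerₛₗ ℝ v) := by
    ext x
    simp [← sub_eq_add_neg, inner_sub_right, hx₀, sub_eq_zero]
  rw [hset, measure_preimage_add_right, Measure.addHaar_submodule μ _ hker]

theorem addHaar_setOf_powerDist_eq {a b : E} (hab : a ≠ b) (α β : ℝ) :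
    μ {x | ‖x - a‖ ^ 2 - α = ‖x - b‖ ^ 2 - β} = 0 := by
  refine measure_mono_null (fun x hx => ?_) <|
    addHaar_setOf_inner_eq μ (sub_ne_zero.2 hab.symm) ((‖b‖ ^ 2 - β - (‖a‖ ^ 2 - α)) / 2)
  obtain hx : ‖x - a‖ ^ 2 - α = ‖x - b‖ ^ 2 - β := hx
  rw [norm_sub_sq_real, norm_sub_sq_real, real_inner_comm a x, real_inner_comm b x] at hx
  show ⟪b - a, x⟫_ℝ = _
  rw [inner_sub_left]
  linarith

end Hyperplane

section WeakDuality

variable {X Y : Type*} [MeasurableSpace X] [MeasurableSpace Y]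

theorem integral_add_integral_le_of_ae_le {π : Measure (X × Y)} {φ : X → ℝ} {η : Y → ℝ}
    {c : X × Y → ℝ} (hφ : Integrable φ (π.map Prod.fst)) (hη : Integrable η (π.map Prod.snd))
    (hc : Integrable c π) (hle : ∀ᵐ p ∂π, φ p.1 + η p.2 ≤ c p) :
    ∫ x, φ x ∂π.map Prod.fst + ∫ y, η y ∂π.map Prod.snd ≤ ∫ p, c p ∂π := by
  have hφ' : Integrable (fun p : X × Y => φ p.1) π := hφ.comp_measurable measurable_fst
  have hη' : Integrable (fun p : X × Y => η p.2) π := hη.comp_measurable measurable_snd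
  rw [integral_map measurable_fst.aemeasurable hφ.1,
    integral_map measurable_snd.aemeasurable hη.1, ← integral_add hφ' hη']
  exact integral_mono_ae (hφ'.add hη') hc hle

end WeakDuality

section Atomic

variable {ι X : Type*} [Fintype ι] [MeasurableSpace X] [MeasurableSingletonClass X]

theorem ae_mem_range_sum_smul_dirac (w : ι → ℝ≥0∞) (x : ι → X) :
    ∀ᵐ y ∂(∑ i, w i • Measure.dirac (x i)), y ∈ Set.range x := by
  rw [ae_iff, Measure.coe_finsetSum, Finset.sum_apply]
  refine Finset.sum_eq_zero fun i _ => ?_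
  simp [Measure.dirac_apply]

theorem integral_sum_smul_dirac {w : ι → ℝ≥0∞} (hw : ∀ i, w i ≠ ∞) (x : ι → X) (f : X → ℝ) :
    Integrable f (∑ i, w i • Measure.dirac (x i)) ∧
      ∫ y, f y ∂(∑ i, w i • Measure.dirac (x i)) = ∑ i, (w i).toReal * f (x i) := by
  have hint : ∀ i, Integrable f (w i • Measure.dirac (x i)) := fun i =>
    (integrable_dirac enorm_lt_top).smul_measure (hw i)
  refine ⟨integrable_finsetSum_measure.2 fun i _ => hint i, ?_⟩
  rw [integral_finsetSum_measure fun i _ => hint i]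
  simp [integral_smul_measure, integral_dirac]

end Atomic

section CTransform

variable {ι E : Type*} [Fintype ι] [Nonempty ι] [NormedAddCommGroup E] (s : ι → E) (ψ : ι → ℝ)

def cTransform (x : E) : ℝ :=
  Finset.univ.inf' Finset.univ_nonempty fun j => ‖x - s j‖ ^ 2 - ψ j

theorem continuous_cTransform : Continuous (cTransform s ψ) :=
  Continuous.finset_inf'_apply _ fun _ _ => by fun_prop

theorem cTransform_le (x : E) (j : ι) : cTransform s ψ x ≤ ‖x - s j‖ ^ 2 - ψ j :=
  Finset.inf'_le _ (Finset.mem_univ j)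

end CTransform

section Laguerre

variable {d N : ℕ} {D : Set (EuclideanSpace ℝ (Fin d))} {s : Fin N → EuclideanSpace ℝ (Fin d)}
  {ψ : Fin N → ℝ}

theorem isClosed_Lag (i : Fin N) : IsClosed (Lag D s ψ i) := by
  have hLag : Lag D s ψ i = closure D ∩
      ⋂ (j) (_ : j ≠ i), {x | ‖x - s i‖ ^ 2 - ψ i ≤ ‖x - s j‖ ^ 2 - ψ j} := by
    ext x
    simp [Lag]
  rw [hLag]
  exact isClosed_closure.inter <|
    isClosed_biInter fun j _ => isClosed_le (by fun_prop) (by fun_prop)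

theorem isCompact_Vcell (i : Fin N) : IsCompact (Vcell D s ψ i) := by
  refine Metric.isCompact_of_isClosed_isBounded
    ((isClosed_Lag i).inter (isClosed_le (by fun_prop) continuous_const)) ?_
  refine (Metric.isBounded_closedBall (x := s i) (r := √(ψ i))).subset fun x hx => ?_
  simpa [Metric.mem_closedBall, dist_eq_norm] using Real.abs_le_sqrt hx.2

theorem volume_Vcell_lt_top (i : Fin N) : volume (Vcell D s ψ i) < ∞ :=
  (isCompact_Vcell i).measure_lt_top

theorem integrableOn_norm_sub_sq_Vcell (i : Fin N) :
    IntegrableOn (fun x => ‖x - s i‖ ^ 2) (Vcell D s ψ i) :=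
  (by fun_prop : Continuous fun x : EuclideanSpace ℝ (Fin d) => ‖x - s i‖ ^ 2).continuousOn
    |>.integrableOn_compact (isCompact_Vcell i)

theorem pairwise_aedisjoint_Vcell (hs : Function.Injective s) :
    Pairwise (Function.onFun (AEDisjoint volume) (Vcell D s ψ)) := fun i j hij =>
  measure_mono_null (fun _ hx => le_antisymm (hx.1.1.2 j hij.symm) (hx.2.1.2 i hij))
    (addHaar_setOf_powerDist_eq volume (hs.ne hij) (ψ i) (ψ j))

variable [Nonempty (Fin N)]

theorem cTransform_eq_of_mem_Vcell {i : Fin N} {x : EuclideanSpace ℝ (Fin d)}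
    (hx : x ∈ Vcell D s ψ i) : cTransform s ψ x = ‖x - s i‖ ^ 2 - ψ i := by
  refine le_antisymm (cTransform_le s ψ x i) (Finset.le_inf' _ _ fun j _ => ?_)
  rcases eq_or_ne j i with rfl | hji
  · exact le_rfl
  · exact hx.1.2 j hji

theorem integral_cTransform_iUnion_Vcell (hs : Function.Injective s) :
    ∫ x in ⋃ i, Vcell D s ψ i, cTransform s ψ x =
      ∑ i, ((∫ x in Vcell D s ψ i, ‖x - s i‖ ^ 2) - volume.real (Vcell D s ψ i) * ψ i) := by
  have hmeas : ∀ i, MeasurableSet (Vcell D s ψ i) := fun i => (isCompact_Vcell i).measurableSet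
  rw [integral_iUnion_ae (fun i => (hmeas i).nullMeasurableSet) (pairwise_aedisjoint_Vcell hs)
    ((continuous_cTransform s ψ).continuousOn.integrableOn_compact
      (isCompact_iUnion isCompact_Vcell)), tsum_fintype]
  refine Finset.sum_congr rfl fun i _ => ?_
  rw [setIntegral_congr_fun (hmeas i) fun x hx => cTransform_eq_of_mem_Vcell hx,
    integral_sub (integrableOn_norm_sub_sq_Vcell i)
      (integrableOn_const (volume_Vcell_lt_top i).ne),
    setIntegral_const, smul_eq_mul]

end Laguerre

theorem sum_integral_Vcell_le_integral_cost {d N : ℕ} {D : Set (EuclideanSpace ℝ (Fin d))}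
    {s : Fin N → EuclideanSpace ℝ (Fin d)} (hs : Function.Injective s) {ψ : Fin N → ℝ}
    {π : Measure (EuclideanSpace ℝ (Fin d) × EuclideanSpace ℝ (Fin d))}
    (h1 : π.map Prod.fst = volume.restrict (⋃ i, Vcell D s ψ i))
    (h2 : π.map Prod.snd = ∑ i, volume (Vcell D s ψ i) • Measure.dirac (s i))
    (hc : Integrable (fun p => ‖p.1 - p.2‖ ^ 2) π) :
    ∑ i, ∫ x in Vcell D s ψ i, ‖x - s i‖ ^ 2 ≤ ∫ p, ‖p.1 - p.2‖ ^ 2 ∂π := by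
  cases isEmpty_or_nonempty (Fin N)
  · simpa using integral_nonneg fun p => sq_nonneg ‖p.1 - p.2‖
  have hφ : Integrable (cTransform s ψ) (π.map Prod.fst) := h1 ▸
    (continuous_cTransform s ψ).continuousOn.integrableOn_compact
      (isCompact_iUnion isCompact_Vcell)
  obtain ⟨hη, hη_eq⟩ := integral_sum_smul_dirac
    (fun i => (volume_Vcell_lt_top (D := D) (ψ := ψ) i).ne) s (Function.extend s ψ 0)
  have hle : ∀ᵐ p ∂π, cTransform s ψ p.1 + Function.extend s ψ 0 p.2 ≤ ‖p.1 - p.2‖ ^ 2 := by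
    filter_upwards [ae_of_ae_map measurable_snd.aemeasurable
      (h2 ▸ ae_mem_range_sum_smul_dirac _ s)] with p ⟨j, hj⟩
    rw [← hj, hs.extend_apply]
    linarith [cTransform_le s ψ p.1 j]
  have hdual := integral_add_integral_le_of_ae_le hφ (h2 ▸ hη) hc hle
  rw [h1, h2, integral_cTransform_iUnion_Vcell hs, hη_eq] at hdual
  simpa only [hs.extend_apply, ← measureReal_def, ← Finset.sum_add_distrib, sub_add_cancel]
    using hdual

theorem stmt6_general {d N : ℕ}
    (D : Set (EuclideanSpace ℝ (Fin d)))
    (s : Fin N → EuclideanSpace ℝ (Fin d)) (hs : Function.Injective s)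
    (ψ : Fin N → ℝ)
    (π : Measure (EuclideanSpace ℝ (Fin d) × EuclideanSpace ℝ (Fin d)))
    (h1 : π.map Prod.fst = volume.restrict (⋃ i, Vcell D s ψ i))
    (h2 : π.map Prod.snd = ∑ i, volume (Vcell D s ψ i) • Measure.dirac (s i)) :
    ∑ i, ∫⁻ x in Vcell D s ψ i, ENNReal.ofReal (‖x - s i‖ ^ 2) ≤
      ∫⁻ p, ENNReal.ofReal (‖p.1 - p.2‖ ^ 2) ∂π := by
  rcases eq_top_or_lt_top (∫⁻ p, ENNReal.ofReal (‖p.1 - p.2‖ ^ 2) ∂π) with htop | hfin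
  · exact htop ▸ le_top
  have hc : Integrable (fun p => ‖p.1 - p.2‖ ^ 2) π :=
    ⟨by fun_prop, (hasFiniteIntegral_iff_ofReal (ae_of_all _ fun _ => by positivity)).2 hfin⟩
  rw [← ofReal_integral_eq_lintegral_ofReal hc (ae_of_all _ fun _ => by positivity)]
  calc ∑ i, ∫⁻ x in Vcell D s ψ i, ENNReal.ofReal (‖x - s i‖ ^ 2)
      = ∑ i, ENNReal.ofReal (∫ x in Vcell D s ψ i, ‖x - s i‖ ^ 2) :=
        Finset.sum_congr rfl fun i _ => (ofReal_integral_eq_lintegral_ofReal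
          (integrableOn_norm_sub_sq_Vcell i) (ae_of_all _ fun _ => by positivity)).symm
    _ = ENNReal.ofReal (∑ i, ∫ x in Vcell D s ψ i, ‖x - s i‖ ^ 2) :=
        (ENNReal.ofReal_sum_of_nonneg fun _ _ => integral_nonneg fun _ => by positivity).symm
    _ ≤ ENNReal.ofReal (∫ p, ‖p.1 - p.2‖ ^ 2 ∂π) :=
        ENNReal.ofReal_le_ofReal (sum_integral_Vcell_le_integral_cost hs h1 h2 hc)

/-- Optimality of the Laguerre-cell transport map for the quadratic cost: any transport
plan between the restricted Lebesgue measure on the union of the cells and the induced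
discrete measure on the seeds has cost at least that of the map sending each cell to
its seed. -/
theorem stmt6 {d N : ℕ} (hd : 1 ≤ d)
    (D : Set (EuclideanSpace ℝ (Fin d)))
    (hDo : IsOpen D) (hDb : Bornology.IsBounded D)
    (s : Fin N → EuclideanSpace ℝ (Fin d)) (hs : Function.Injective s)
    (ψ : Fin N → ℝ)
    (π : Measure (EuclideanSpace ℝ (Fin d) × EuclideanSpace ℝ (Fin d)))
    [IsFiniteMeasure π]
    (h1 : π.map Prod.fst = volume.restrict (⋃ i, Vcell D s ψ i))
    (h2 : π.map Prod.snd = ∑ i, volume (Vcell D s ψ i) • Measure.dirac (s i)) :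
    ∑ i, ∫⁻ x in Vcell D s ψ i, ENNReal.ofReal (‖x - s i‖ ^ 2) ≤
      ∫⁻ p, ENNReal.ofReal (‖p.1 - p.2‖ ^ 2) ∂π :=
  stmt6_general D s hs ψ π h1 h2
end
end
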